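/- arXiv:1612.09036 — 6 statements merged into one kernel-verified Lean document; each statement's English description precedes it below -/
import Mathlib

section
/- Let q be an odd prime power and let G be a tree (a connected acyclic simple graph), locally finite, in which every vertex has degree at least 4. Then there exists a nonconstant F_q-valued holomorphic function on G. -/
/-- The Laplacian-based notion of a harmonic function on a locally finite simple graph. -/
def SimpleGraph.IsHarmonic {V R : Type*} [CommRing R] (G : SimpleGraph V)
    [G.LocallyFinite] (f : V → R) : Prop :=
  ∀ x : V, ∑ y ∈ G.neighborFinset x, (f y - f x) = 0

/-- A function is holomorphic if both it and its square are harmonic. -/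
def SimpleGraph.IsHolomorphic {V R : Type*} [CommRing R] (G : SimpleGraph V)
    [G.LocallyFinite] (f : V → R) : Prop :=
  G.IsHarmonic f ∧ G.IsHarmonic (fun x => (f x) ^ 2)

section Algebra
open Polynomial

variable {F : Type*} [Field F] [Fintype F]

lemma three_sum_aux (hq : Odd (Fintype.card F)) (d : F) :
    ∃ x y z : F, x + y + z = d ∧ x ^ 2 + y ^ 2 + z ^ 2 = -d ^ 2 := by
  have hcard : Fintype.card F % 2 = 1 := Nat.odd_iff.mp hq
  by_cases h3 : (3 : F) = 0
  · exact ⟨-d, -d, 3 * d, by ring, by linear_combination (4 * d ^ 2) * h3⟩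
  · set f : F[X] := C 3 * X ^ 2 + C (-(2 * d)) * X + C (d ^ 2) with hf
    set g : F[X] := C 1 * X ^ 2 + C 0 * X + C 0 with hg
    have hf2 : f.degree = 2 := degree_quadratic h3
    have hg2 : g.degree = 2 := degree_quadratic one_ne_zero
    obtain ⟨u, v, huv⟩ := FiniteField.exists_root_sum_quadratic hf2 hg2 hcard
    simp only [hf, hg, eval_add, eval_mul, eval_pow, eval_C, eval_X] at huv
    exact ⟨u + v, u - v, d - 2 * u, by ring, by linear_combination (2 : F) * huv⟩

/-- Given a finset with at least 3 elements, one can prescribe both the sum and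
(compatibly) the sum of squares of a function supported on it. -/
lemma exists_fun_sum_sq {V : Type*} (hq : Odd (Fintype.card F)) (d : F)
    (s : Finset V) (hs : 3 ≤ s.card) :
    ∃ g : V → F, (∀ v ∉ s, g v = 0) ∧ ∑ v ∈ s, g v = d ∧
      ∑ v ∈ s, (g v) ^ 2 = -d ^ 2 := by
  classical
  obtain ⟨t, hts, ht3⟩ := Finset.exists_subset_card_eq hs
  obtain ⟨a, b, c, hab, hac, hbc, rfl⟩ := Finset.card_eq_three.mp ht3
  obtain ⟨x, y, z, hsum, hsq⟩ := three_sum_aux hq d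
  refine ⟨fun v => if v = a then x else if v = b then y else if v = c then z else 0,
    fun v hv => ?_, ?_, ?_⟩
  · have ha : v ≠ a := fun h => hv (hts (by simp [h]))
    have hb : v ≠ b := fun h => hv (hts (by simp [h]))
    have hc : v ≠ c := fun h => hv (hts (by simp [h]))
    simp [ha, hb, hc]
  · rw [← Finset.sum_subset hts (fun v _ hv => by
      have ha : v ≠ a := fun h => hv (by simp [h])
      have hb : v ≠ b := fun h => hv (by simp [h])
      have hc : v ≠ c := fun h => hv (by simp [h])
      simp [ha, hb, hc])]
    rw [show ({a, b, c} : Finset V) = insert a (insert b {c}) from rfl,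
      Finset.sum_insert (by simp [hab, hac]), Finset.sum_insert (by simp [hbc]),
      Finset.sum_singleton]
    simp only [if_pos rfl, hab.symm, hac.symm, hbc.symm, if_neg, if_pos rfl]
    simp [hab.symm, hac.symm, hbc.symm]
    linear_combination hsum
  · rw [← Finset.sum_subset hts (fun v _ hv => by
      have ha : v ≠ a := fun h => hv (by simp [h])
      have hb : v ≠ b := fun h => hv (by simp [h])
      have hc : v ≠ c := fun h => hv (by simp [h])
      simp [ha, hb, hc])]
    rw [show ({a, b, c} : Finset V) = insert a (insert b {c}) from rfl,
      Finset.sum_insert (by simp [hab, hac]), Finset.sum_insert (by simp [hbc]),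
      Finset.sum_singleton]
    simp [hab.symm, hac.symm, hbc.symm]
    linear_combination hsq


end Algebra

open SimpleGraph Walk

namespace TreeHolo


variable {V : Type*} {G : SimpleGraph V}

/-- The unique path from `r` to `v` in a tree. -/
noncomputable def ptw (ht : G.IsTree) (r v : V) : G.Walk r v :=
  (ht.existsUnique_path r v).choose

lemma ptw_isPath (ht : G.IsTree) (r v : V) : (ptw ht r v).IsPath :=
  (ht.existsUnique_path r v).choose_spec.1

lemma ptw_unique (ht : G.IsTree) {r v : V} (p : G.Walk r v) (hp : p.IsPath) :
    p = ptw ht r v :=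
  (ht.existsUnique_path r v).choose_spec.2 p hp

/-- depth of a vertex -/
noncomputable def len (ht : G.IsTree) (r v : V) : ℕ := (ptw ht r v).length

/-- parent of a vertex -/
noncomputable def par (ht : G.IsTree) (r v : V) : V := (ptw ht r v).reverse.getVert 1

lemma ptw_self (ht : G.IsTree) (r : V) : ptw ht r r = Walk.nil :=
  (ptw_unique ht Walk.nil IsPath.nil).symm

lemma len_self (ht : G.IsTree) (r : V) : len ht r r = 0 := by
  rw [len, ptw_self]; rfl

lemma eq_self_of_len_eq_zero (ht : G.IsTree) {r v : V} (h : len ht r v = 0) : v = r :=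
  (Walk.eq_of_length_eq_zero h).symm

lemma par_of_concat (ht : G.IsTree) {r u v : V} (h : G.Adj u v)
    (hc : ptw ht r v = (ptw ht r u).concat h) : par ht r v = u := by
  rw [par, hc, Walk.reverse_concat]
  simp [Walk.getVert_cons_succ]

/-- decomposition of the path to a non-root vertex -/
lemma exists_concat (ht : G.IsTree) {r v : V} (hv : v ≠ r) :
    ∃ h : G.Adj (par ht r v) v,
      ptw ht r v = (ptw ht r (par ht r v)).concat h := by
  have hnn : ¬ (ptw ht r v).Nil := by
    intro hnil
    exact hv (eq_self_of_len_eq_zero ht (Walk.nil_iff_length_eq.mp hnil))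
  have hnnr : ¬ (ptw ht r v).reverse.Nil := by
    rw [Walk.nil_iff_length_eq, Walk.length_reverse, ← Walk.nil_iff_length_eq]
    exact hnn
  obtain ⟨u, hadj, q, hq⟩ := Walk.not_nil_iff.mp hnnr
  have hptw : ptw ht r v = q.reverse.concat hadj.symm := by
    have := congrArg Walk.reverse hq
    rwa [Walk.reverse_reverse, Walk.reverse_cons] at this
  have hqpath : q.reverse.IsPath := by
    have hp := ptw_isPath ht r v
    rw [hptw, Walk.concat_eq_append] at hp
    exact hp.of_append_left
  have hqeq : q.reverse = ptw ht r u := ptw_unique ht _ hqpath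
  rw [hqeq] at hptw
  have hpar : par ht r v = u := par_of_concat ht hadj.symm hptw
  subst hpar
  exact ⟨hadj.symm, hptw⟩

lemma len_par (ht : G.IsTree) {r v : V} (hv : v ≠ r) :
    len ht r (par ht r v) + 1 = len ht r v := by
  obtain ⟨h, hc⟩ := exists_concat ht hv
  rw [len, len, hc, Walk.length_concat]

lemma adj_par (ht : G.IsTree) {r v : V} (hv : v ≠ r) : G.Adj (par ht r v) v :=
  (exists_concat ht hv).choose

/-- key dichotomy: a neighbor is either one step farther or one step closer. -/
lemma adj_dichotomy (ht : G.IsTree) (r : V) {x y : V} (hxy : G.Adj x y) :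
    (ptw ht r y = (ptw ht r x).concat hxy ∧ len ht r y = len ht r x + 1) ∨
    (ptw ht r x = (ptw ht r y).concat hxy.symm ∧ len ht r x = len ht r y + 1) := by
  classical
  by_cases hy : y ∈ (ptw ht r x).support
  · right
    set p := ptw ht r x with hp
    have hsplit := Walk.take_spec p hy
    have htake : (p.takeUntil y hy).IsPath := (ptw_isPath ht r x).takeUntil hy
    have hdrop : (p.dropUntil y hy).IsPath := (ptw_isPath ht r x).dropUntil hy
    have hsingle : (Walk.cons hxy.symm Walk.nil : G.Walk y x).IsPath := by
      simp [Walk.cons_isPath_iff, IsPath.nil, hxy.ne']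
    have hpu : ∀ ⦃a b : V⦄ (p q : G.Path a b), p = q :=
      SimpleGraph.isAcyclic_iff_path_unique.mp ht.IsAcyclic
    have hde : p.dropUntil y hy = Walk.cons hxy.symm Walk.nil := by
      have := hpu ⟨p.dropUntil y hy, hdrop⟩ ⟨Walk.cons hxy.symm Walk.nil, hsingle⟩
      exact congrArg Subtype.val this
    have htakeq : p.takeUntil y hy = ptw ht r y := ptw_unique ht _ htake
    have hconc : ptw ht r x = (ptw ht r y).concat hxy.symm := by
      conv_lhs => rw [show ptw ht r x = p from rfl, ← hsplit]
      rw [hde, htakeq, Walk.concat_eq_append]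
    exact ⟨hconc, by rw [len, len, hconc, Walk.length_concat]⟩
  · left
    have hpath : ((ptw ht r x).concat hxy).IsPath := by
      have h1 : ((ptw ht r x).concat hxy).reverse.IsPath := by
        rw [Walk.reverse_concat]
        refine ((ptw_isPath ht r x).reverse).cons ?_
        rwa [Walk.support_reverse, List.mem_reverse]
      have := h1.reverse
      rwa [Walk.reverse_reverse] at this
    have hconc : ptw ht r y = (ptw ht r x).concat hxy := (ptw_unique ht _ hpath).symm
    exact ⟨hconc, by rw [len, len, hconc, Walk.length_concat]⟩


section Children

variable [G.LocallyFinite]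

open Classical in
/-- The children of `x`: neighbors farther from the root. -/
noncomputable def children (ht : G.IsTree) (r x : V) : Finset V :=
  (G.neighborFinset x).filter (fun y => len ht r x < len ht r y)

lemma mem_children_iff (ht : G.IsTree) (r x y : V) :
    y ∈ children ht r x ↔ G.Adj x y ∧ len ht r y = len ht r x + 1 := by
  classical
  simp only [children, Finset.mem_filter, SimpleGraph.mem_neighborFinset]
  constructor
  · rintro ⟨hadj, hlt⟩
    refine ⟨hadj, ?_⟩
    rcases adj_dichotomy ht r hadj with ⟨_, h⟩ | ⟨_, h⟩
    · exact h
    · omega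
  · rintro ⟨hadj, heq⟩
    exact ⟨hadj, by omega⟩

lemma par_of_child (ht : G.IsTree) {r x y : V} (h : y ∈ children ht r x) :
    par ht r y = x := by
  obtain ⟨hadj, hlen⟩ := (mem_children_iff ht r x y).mp h
  rcases adj_dichotomy ht r hadj with ⟨hc, _⟩ | ⟨_, h2⟩
  · exact par_of_concat ht hadj hc
  · omega

lemma child_ne_root (ht : G.IsTree) {r x y : V} (h : y ∈ children ht r x) : y ≠ r := by
  obtain ⟨_, hlen⟩ := (mem_children_iff ht r x y).mp h
  intro hy
  rw [hy, len_self] at hlen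
  omega

lemma par_not_mem_children (ht : G.IsTree) {r x : V} (hx : x ≠ r) :
    par ht r x ∉ children ht r x := by
  intro h
  obtain ⟨_, hlen⟩ := (mem_children_iff ht r x _).mp h
  have := len_par ht hx
  omega

lemma neighborFinset_root (ht : G.IsTree) (r : V) :
    G.neighborFinset r = children ht r r := by
  classical
  ext y
  simp only [SimpleGraph.mem_neighborFinset, mem_children_iff ht r r y]
  refine ⟨fun hadj => ⟨hadj, ?_⟩, fun h => h.1⟩
  rcases adj_dichotomy ht r hadj with ⟨_, h⟩ | ⟨_, h⟩
  · exact h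
  · rw [len_self] at h; omega

open Classical in
lemma neighborFinset_eq (ht : G.IsTree) {r x : V} (hx : x ≠ r) :
    G.neighborFinset x = insert (par ht r x) (children ht r x) := by
  classical
  ext y
  simp only [SimpleGraph.mem_neighborFinset, Finset.mem_insert, mem_children_iff ht r x y]
  constructor
  · intro hadj
    rcases adj_dichotomy ht r hadj with ⟨_, h⟩ | ⟨hc, h⟩
    · exact Or.inr ⟨hadj, h⟩
    · exact Or.inl (par_of_concat ht hadj.symm hc).symm
  · rintro (rfl | ⟨hadj, _⟩)
    · exact (adj_par ht hx).symm
    · exact hadj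

lemma card_children_root (ht : G.IsTree) (r : V) (hdeg : 4 ≤ G.degree r) :
    4 ≤ (children ht r r).card := by
  rwa [SimpleGraph.degree, neighborFinset_root ht r] at hdeg

lemma card_children (ht : G.IsTree) {r x : V} (hx : x ≠ r) (hdeg : 4 ≤ G.degree x) :
    3 ≤ (children ht r x).card := by
  classical
  rw [SimpleGraph.degree, neighborFinset_eq ht hx,
    Finset.card_insert_of_notMem (par_not_mem_children ht hx)] at hdeg
  omega

end Children



section Assign

variable {F : Type*} [Field F] [Fintype F] [G.LocallyFinite]




open Classical in
/-- assignment of difference values to the children of `x`, given incoming difference `d`. -/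
noncomputable def asg (ht : G.IsTree) (r : V) (hq : Odd (Fintype.card F)) (x : V) (d : F) :
    V → F :=
  if h : 3 ≤ (children ht r x).card then (exists_fun_sum_sq hq d _ h).choose else 0

lemma asg_spec (ht : G.IsTree) (r : V) (hq : Odd (Fintype.card F)) (x : V) (d : F)
    (h : 3 ≤ (children ht r x).card) :
    (∀ v ∉ children ht r x, asg ht r hq x d v = 0) ∧
      ∑ v ∈ children ht r x, asg ht r hq x d v = d ∧
      ∑ v ∈ children ht r x, (asg ht r hq x d v) ^ 2 = -d ^ 2 := by
  rw [asg, dif_pos h]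
  exact (exists_fun_sum_sq hq d _ h).choose_spec

open Classical in
/-- The difference function: `D v = φ v - φ (parent v)`. -/
noncomputable def D (ht : G.IsTree) (r : V) (hq : Odd (Fintype.card F)) (g0 : V → F)
    (v : V) : F :=
  if hv : v = r then 0
  else if par ht r v = r then g0 v
  else asg ht r hq (par ht r v) (D ht r hq g0 (par ht r v)) v
termination_by len ht r v
decreasing_by
  have := len_par ht hv
  omega

open Classical in
/-- The holomorphic function. -/
noncomputable def phi (ht : G.IsTree) (r : V) (hq : Odd (Fintype.card F)) (g0 : V → F)
    (v : V) : F :=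
  if hv : v = r then 0
  else phi ht r hq g0 (par ht r v) + D ht r hq g0 v
termination_by len ht r v
decreasing_by
  have := len_par ht hv
  omega

lemma phi_root (ht : G.IsTree) (r : V) (hq : Odd (Fintype.card F)) (g0 : V → F) :
    phi ht r hq g0 r = 0 := by
  rw [phi]; simp

lemma phi_ne_root (ht : G.IsTree) {r : V} (hq : Odd (Fintype.card F)) (g0 : V → F)
    {v : V} (hv : v ≠ r) :
    phi ht r hq g0 v = phi ht r hq g0 (par ht r v) + D ht r hq g0 v := by
  rw [phi]; simp [hv]

lemma D_child_root (ht : G.IsTree) {r : V} (hq : Odd (Fintype.card F)) (g0 : V → F)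
    {y : V} (hy : y ∈ children ht r r) :
    D ht r hq g0 y = g0 y := by
  rw [D]
  simp [child_ne_root ht hy, par_of_child ht hy]

lemma D_child (ht : G.IsTree) {r x : V} (hq : Odd (Fintype.card F)) (g0 : V → F)
    (hx : x ≠ r) {y : V} (hy : y ∈ children ht r x) :
    D ht r hq g0 y = asg ht r hq x (D ht r hq g0 x) y := by
  rw [D]
  simp [child_ne_root ht hy, par_of_child ht hy, hx]

end Assign


end TreeHolo

open TreeHolo in
/-- on a locally finite tree in which every vertex has degree at least 4,
there is a nonconstant holomorphic function with values in the finite field `F_q`,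
`q` an odd prime power. -/
theorem exists_nonconstant_holomorphic_of_tree_min_degree_four
    {V : Type*} (G : SimpleGraph V) [G.LocallyFinite]
    (htree : G.IsTree) (hdeg : ∀ v : V, 4 ≤ G.degree v)
    {F : Type*} [Field F] [Fintype F] (hq : Odd (Fintype.card F)) :
    ∃ φ : V → F, G.IsHolomorphic φ ∧ ∃ a b : V, φ a ≠ φ b := by
  classical
  obtain ⟨r⟩ := htree.isConnected.nonempty
  have hcr : 4 ≤ (children htree r r).card := card_children_root htree r (hdeg r)
  obtain ⟨c0, hc0⟩ : (children htree r r).Nonempty := Finset.card_pos.mp (by omega)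
  have herase : 3 ≤ ((children htree r r).erase c0).card := by
    rw [Finset.card_erase_of_mem hc0]; omega
  obtain ⟨g', hg'0, hg'sum, hg'sq⟩ := exists_fun_sum_sq hq (-1 : F) _ herase
  set g0 : V → F := fun v => if v = c0 then 1 else g' v with hg0def
  have hg0c0 : g0 c0 = 1 := by simp [hg0def]
  have hg0erase : ∀ v ∈ (children htree r r).erase c0, g0 v = g' v := by
    intro v hv
    simp [hg0def, Finset.ne_of_mem_erase hv]
  have hg0sum : ∑ v ∈ children htree r r, g0 v = 0 := by
    rw [← Finset.add_sum_erase _ g0 hc0, hg0c0,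
      Finset.sum_congr rfl hg0erase, hg'sum]
    ring
  have hg0sq : ∑ v ∈ children htree r r, (g0 v) ^ 2 = 0 := by
    rw [← Finset.add_sum_erase _ (fun v => (g0 v) ^ 2) hc0, hg0c0,
      Finset.sum_congr rfl (fun v hv => by rw [hg0erase v hv]), hg'sq]
    ring
  set φ := phi htree r hq g0 with hφ
  set Df := D htree r hq g0 with hDf
  have key : ∀ x : V, (∑ y ∈ G.neighborFinset x, (φ y - φ x) = 0) ∧
      (∑ y ∈ G.neighborFinset x, (φ y - φ x) ^ 2 = 0) := by
    intro x
    by_cases hx : x = r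
    · subst hx
      have hsupp : ∀ y ∈ children htree x x, φ y - φ x = g0 y := by
        intro y hy
        rw [hφ, phi_ne_root htree hq g0 (child_ne_root htree hy),
          par_of_child htree hy, phi_root, D_child_root htree hq g0 hy]
        ring
      rw [neighborFinset_root htree x]
      exact ⟨by rw [Finset.sum_congr rfl hsupp, hg0sum],
        by rw [Finset.sum_congr rfl (fun y hy => by rw [hsupp y hy]), hg0sq]⟩
    · have hcard : 3 ≤ (children htree r x).card := card_children htree hx (hdeg x)
      obtain ⟨hzero, hsum, hsq⟩ := asg_spec htree r hq x (Df x) hcard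
      have hpar : φ (par htree r x) - φ x = - Df x := by
        rw [hφ, phi_ne_root htree hq g0 hx, ← hDf]
        ring
      have hchild : ∀ y ∈ children htree r x,
          φ y - φ x = asg htree r hq x (Df x) y := by
        intro y hy
        rw [hφ, phi_ne_root htree hq g0 (child_ne_root htree hy),
          par_of_child htree hy, D_child htree hq g0 hx hy, ← hDf]
        ring
      rw [neighborFinset_eq htree hx]
      constructor
      · rw [Finset.sum_insert (par_not_mem_children htree hx), hpar,
          Finset.sum_congr rfl hchild, hsum]
        ring
      · rw [Finset.sum_insert (par_not_mem_children htree hx),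
          Finset.sum_congr rfl (fun y hy => by rw [hchild y hy]), hsq, hpar]
        ring
  refine ⟨φ, ⟨fun x => (key x).1, fun x => ?_⟩, c0, r, ?_⟩
  · have h1 := (key x).1
    have h2 := (key x).2
    have hre : ∑ y ∈ G.neighborFinset x, (φ y ^ 2 - φ x ^ 2) =
        ∑ y ∈ G.neighborFinset x, ((φ y - φ x) ^ 2 + 2 * φ x * (φ y - φ x)) :=
      Finset.sum_congr rfl (fun y _ => by ring)
    simp only []
    rw [hre, Finset.sum_add_distrib, h2, ← Finset.mul_sum, h1]
    ring
  · have hc0r : c0 ≠ r := child_ne_root htree hc0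
    have h1 : φ c0 = 1 := by
      rw [hφ, phi_ne_root htree hq g0 hc0r, par_of_child htree hc0, phi_root,
        D_child_root htree hq g0 hc0, hg0c0]
      ring
    rw [h1, hφ, phi_root]
    exact one_ne_zero
end

section
/- Let p be an odd prime, q a power of p, and t ∈ F_q. Then the number of (p−1)-tuples (x₁,…,x_{p−1}) ∈ F_q^{p−1} satisfying Σ_{j=1}^{p−1} x_j = −t and Σ_{j=1}^{p−1} x_j² = −t² equals q^{p−3}. Consequently, in a tree in which every vertex has degree p, for adjacent vertices e₀ ~ e₁ and prescribed values s at e₀ and u at e₁ (with t = u − s), the set of local solutions of the holomorphicity equations at e₁ on N(e₁) has cardinality q^{p−3}. -/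
/-!
Translating by `t` reduces to `t = 0` (as `p - 1 ≡ -1`), and eliminating one coordinate turns
`∑ xᵢ = ∑ xᵢ² = 0` on `F^(p-1)` into `∑ uᵢ² + c (∑ uᵢ)² = 0` on `F^(p-2)` with `c = 1`.
Completing the square in one variable splits this form as `(1 + c) z²` plus the same form in
one variable fewer with `c / (1 + c)`; the condition `1 + j c ≠ 0` for `j ≤ p - 2` keeps every
split-off coefficient nonzero.

Adding a square `a z²` to a function `Q` exchanges two invariants: the number of zeros of the
new function is determined by the quadratic character sum `∑ χ(Q)`, and its character sum by
the number of zeros of `Q` (via `#{z | z² = y} = 1 + χ(y)` and the Jacobi sum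
`∑_z χ(z² + e) = -1` for `e ≠ 0`). Starting from the empty form, the character sum vanishes in
an even number of variables, and an odd number `m` of variables gives `q^(m-1)` zeros.
-/

open Finset

section QuadraticCharSums

variable {F : Type*} [Field F] [Fintype F] [DecidableEq F]

theorem sum_quadraticChar_mul_add (hF : ringChar F ≠ 2) {c : F} (hc : c ≠ 0) :
    ∑ y : F, quadraticChar F (y * (y + c)) = -1 := by
  have hJ : ∑ x : F, quadraticChar F x * quadraticChar F (1 - x) = -quadraticChar F (-1) := by
    simpa [jacobiSum, (quadraticChar_isQuadratic F).inv] using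
      jacobiSum_nontrivial_inv (quadraticChar_ne_one hF)
  have hscale : ∀ x : F, quadraticChar F (-c * x * (-c * x + c))
      = quadraticChar F (-1) * (quadraticChar F x * quadraticChar F (1 - x)) := fun x => by
    rw [show -c * x * (-c * x + c) = -1 * c ^ 2 * (x * (1 - x)) by ring, map_mul, map_mul,
      map_mul, quadraticChar_sq_one' hc, mul_one]
  rw [← Equiv.sum_comp (Equiv.mulLeft₀ (-c) (neg_ne_zero.mpr hc))]
  simp only [Equiv.mulLeft₀_apply, hscale, ← mul_sum, hJ, mul_neg]
  rw [neg_inj, ← sq, quadraticChar_sq_one (neg_ne_zero.mpr one_ne_zero)]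

theorem sum_quadraticChar_sq_add (hF : ringChar F ≠ 2) (e : F) :
    ∑ w : F, quadraticChar F (w ^ 2 + e) = (if e = 0 then (Fintype.card F : ℤ) else 0) - 1 := by
  have hfib : ∑ w : F, quadraticChar F (w ^ 2 + e)
      = ∑ y : F, (quadraticChar F y + 1) * quadraticChar F (y + e) := by
    rw [← sum_fiberwise' univ (fun w : F => w ^ 2) (fun y => quadraticChar F (y + e))]
    refine sum_congr rfl fun y _ => ?_
    rw [sum_const, nsmul_eq_mul, ← quadraticChar_card_sqrts hF y, Set.toFinset_ofPred]
  simp only [hfib, add_mul, one_mul, ← map_mul, sum_add_distrib]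
  rw [Fintype.sum_equiv (Equiv.addRight e) (fun x => quadraticChar F (x + e)) _ fun _ => rfl,
    quadraticChar_sum_zero hF, add_zero]
  split_ifs with he
  · subst he
    have hsq : ∀ x : F, quadraticChar F (x * (x + 0)) = 1 - if x = 0 then 1 else 0 := fun x => by
      split_ifs with hx
      · simp [hx]
      · rw [add_zero, ← sq, quadraticChar_sq_one' hx, sub_zero]
    rw [sum_congr rfl fun x _ => hsq x, sum_sub_distrib, sum_ite_eq']
    simp
  · rw [sum_quadraticChar_mul_add hF he, zero_sub]

theorem card_filter_add_mul_sq_eq_zero (hF : ringChar F ≠ 2) {a : F} (ha : a ≠ 0) (c : F) :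
    (#{w : F | c + a * w ^ 2 = 0} : ℤ) = quadraticChar F (-a * c) + 1 := by
  have hscale : quadraticChar F (-a * c) = quadraticChar F (-a * c * a⁻¹ ^ 2) := by
    rw [map_mul _ (-a * c), quadraticChar_sq_one' (inv_ne_zero ha), mul_one]
  rw [hscale, ← quadraticChar_card_sqrts hF, Set.toFinset_ofPred]
  congr 3
  ext w
  constructor <;> intro h <;> field_simp at h ⊢ <;> linear_combination h

theorem sum_quadraticChar_add_mul_sq (hF : ringChar F ≠ 2) {a : F} (ha : a ≠ 0) (c : F) :
    ∑ w : F, quadraticChar F (c + a * w ^ 2)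
      = quadraticChar F a * ((if c = 0 then (Fintype.card F : ℤ) else 0) - 1) := by
  have h : ∀ w : F, c + a * w ^ 2 = a * (w ^ 2 + c / a) := fun w => by field_simp; ring
  simp only [h, map_mul, ← mul_sum, sum_quadraticChar_sq_add hF, div_eq_zero_iff, ha, or_false]

variable {V : Type*} [Fintype V]

theorem card_filter_prod_add_mul_sq_eq_zero (hF : ringChar F ≠ 2) {a : F} (ha : a ≠ 0)
    (Q b : V → F) :
    (#{x : F × V | Q x.2 + a * (x.1 + b x.2) ^ 2 = 0} : ℤ)
      = Fintype.card V + quadraticChar F (-a) * ∑ v, quadraticChar F (Q v) := by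
  have hfib : ∀ v : V, #{w : F | Q v + a * (w + b v) ^ 2 = 0} = #{w : F | Q v + a * w ^ 2 = 0} :=
    fun v => card_equiv (Equiv.addRight (b v)) (by simp)
  calc (#{x : F × V | Q x.2 + a * (x.1 + b x.2) ^ 2 = 0} : ℤ)
      = ∑ v, (#{w : F | Q v + a * w ^ 2 = 0} : ℤ) := by
        simp only [card_filter, Nat.cast_sum, Fintype.sum_prod_type_right, ← hfib]
    _ = _ := by
        simp only [card_filter_add_mul_sq_eq_zero hF ha, map_mul, sum_add_distrib, mul_sum]
        simp [add_comm]

theorem sum_quadraticChar_prod_add_mul_sq (hF : ringChar F ≠ 2) {a : F} (ha : a ≠ 0)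
    (Q b : V → F) :
    ∑ x : F × V, quadraticChar F (Q x.2 + a * (x.1 + b x.2) ^ 2)
      = quadraticChar F a * (Fintype.card F * #{v | Q v = 0} - Fintype.card V) := by
  have hshift : ∀ v : V, ∑ w : F, quadraticChar F (Q v + a * (w + b v) ^ 2)
      = ∑ w : F, quadraticChar F (Q v + a * w ^ 2) :=
    fun v => Fintype.sum_equiv (Equiv.addRight (b v)) _ _ fun _ => rfl
  simp only [Fintype.sum_prod_type_right, hshift, sum_quadraticChar_add_mul_sq hF ha, ← mul_sum,
    sum_sub_distrib, ← sum_filter, sum_const, nsmul_eq_mul, card_univ, mul_one]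
  ring

end QuadraticCharSums

section SumSqAddMulSqSum

variable {F : Type*} [Field F]

def sumSqAddMulSqSum {ι : Type*} [Fintype ι] (c : F) (u : ι → F) : F :=
  ∑ i, u i ^ 2 + c * (∑ i, u i) ^ 2

theorem sumSqAddMulSqSum_cons {K : ℕ} {c : F} (hc : 1 + c ≠ 0) (w : F) (u : Fin K → F) :
    sumSqAddMulSqSum c (Fin.cons w u : Fin (K + 1) → F)
      = sumSqAddMulSqSum (c / (1 + c)) u + (1 + c) * (w + c / (1 + c) * ∑ i, u i) ^ 2 := by
  simp only [sumSqAddMulSqSum, Fin.sum_univ_succ, Fin.cons_zero, Fin.cons_succ]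
  field_simp
  ring

variable [Fintype F] [DecidableEq F]

theorem sum_quadraticChar_sumSqAddMulSqSum_and_card_zeros (hF : ringChar F ≠ 2) (K : ℕ) {c : F}
    (hc : ∀ j ≤ K, 1 + j * c ≠ 0) :
    (Even K → ∑ u : Fin K → F, quadraticChar F (sumSqAddMulSqSum c u) = 0) ∧
    (Odd K → (Fintype.card F * #{u : Fin K → F | sumSqAddMulSqSum c u = 0} : ℤ)
      = Fintype.card F ^ K) := by
  induction K generalizing c with
  | zero => simp [sumSqAddMulSqSum]
  | succ K ih =>
    have ha : 1 + c ≠ 0 := by simpa using hc 1 (by omega)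
    have hc' : ∀ j ≤ K, 1 + j * (c / (1 + c)) ≠ 0 := fun j hj => by
      rw [show 1 + j * (c / (1 + c)) = (1 + (j + 1 : ℕ) * c) / (1 + c) by
        push_cast; field_simp; ring]
      exact div_ne_zero (hc (j + 1) (by omega)) ha
    obtain ⟨ihEven, ihOdd⟩ := ih hc'
    let e := Fin.consEquiv fun _ : Fin (K + 1) => F
    let b : (Fin K → F) → F := fun u => c / (1 + c) * ∑ i, u i
    have hform : ∀ x : F × (Fin K → F), sumSqAddMulSqSum c (e x)
        = sumSqAddMulSqSum (c / (1 + c)) x.2 + (1 + c) * (x.1 + b x.2) ^ 2 :=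
      fun x => sumSqAddMulSqSum_cons ha x.1 x.2
    constructor
    · intro hK
      rw [← e.sum_comp]
      simp only [hform]
      rw [sum_quadraticChar_prod_add_mul_sq hF ha,
        ihOdd (Nat.not_even_iff_odd.mp (Nat.even_add_one.mp hK))]
      simp
    · intro hK
      have hzeros : #{u : Fin (K + 1) → F | sumSqAddMulSqSum c u = 0}
          = #{x : F × (Fin K → F) |
              sumSqAddMulSqSum (c / (1 + c)) x.2 + (1 + c) * (x.1 + b x.2) ^ 2 = 0} :=
        (card_equiv e fun x => by simp [hform]).symm
      rw [hzeros, card_filter_prod_add_mul_sq_eq_zero hF ha,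
        ihEven (Nat.not_odd_iff_even.mp (Nat.odd_add_one.mp hK))]
      simp [pow_succ']

theorem card_filter_sumSqAddMulSqSum_eq_zero (hF : ringChar F ≠ 2) {K : ℕ} (hK : Odd K) {c : F}
    (hc : ∀ j ≤ K, 1 + j * c ≠ 0) :
    #{u : Fin K → F | sumSqAddMulSqSum c u = 0} = Fintype.card F ^ (K - 1) := by
  have h := (sum_quadraticChar_sumSqAddMulSqSum_and_card_zeros hF K hc).2 hK
  obtain ⟨k, rfl⟩ := hK
  rw [pow_succ'] at h
  rw [Nat.add_sub_cancel]
  exact_mod_cast mul_left_cancel₀ (by exact_mod_cast Fintype.card_ne_zero) h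

end SumSqAddMulSqSum

section Reduction

variable {F : Type*} [Field F]

theorem natCard_sum_eq_neg_and_sum_sq_eq_neg_sq {ι : Type*} [Fintype ι]
    (hι : (Fintype.card ι : F) = -1) (t : F) :
    Nat.card {x : ι → F // ∑ i, x i = -t ∧ ∑ i, x i ^ 2 = -t ^ 2}
      = Nat.card {x : ι → F // ∑ i, x i = 0 ∧ ∑ i, x i ^ 2 = 0} := by
  refine Nat.card_congr (Equiv.subtypeEquiv (Equiv.subRight fun _ => t) fun x => ?_)
  have hsum : ∑ i, (x i - t) = ∑ i, x i + t := by
    simp only [sum_sub_distrib, sum_const, card_univ, nsmul_eq_mul, hι]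
    ring
  have hsum_sq : ∑ i, (x i - t) ^ 2 = ∑ i, x i ^ 2 - 2 * t * ∑ i, x i - t ^ 2 := by
    simp only [sub_sq, sum_add_distrib, sum_sub_distrib, ← sum_mul, ← mul_sum, sum_const,
      card_univ, nsmul_eq_mul, hι]
    ring
  simp only [Equiv.subRight_apply, Pi.sub_apply, hsum, hsum_sq]
  constructor
  · rintro ⟨hs, hs2⟩
    exact ⟨by linear_combination hs, by linear_combination hs2 - 2 * t * hs⟩
  · rintro ⟨hs, hs2⟩
    exact ⟨by linear_combination hs, by linear_combination hs2 + 2 * t * hs⟩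

theorem natCard_sum_eq_zero_and_sum_sq_eq_zero [Fintype F] [DecidableEq F] (K : ℕ) :
    Nat.card {x : Fin (K + 1) → F // ∑ i, x i = 0 ∧ ∑ i, x i ^ 2 = 0}
      = #{u : Fin K → F | sumSqAddMulSqSum 1 u = 0} := by
  rw [← Fintype.card_subtype, ← Nat.card_eq_fintype_card]
  refine Nat.card_congr
    { toFun := fun x => ⟨Fin.tail x.1, ?_⟩
      invFun := fun u => ⟨Fin.cons (-∑ i, u.1 i) u.1, ?_⟩
      left_inv := ?_
      right_inv := fun u => rfl }
  · obtain ⟨x, hs, hs2⟩ := x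
    rw [Fin.sum_univ_succ] at hs hs2
    show ∑ i, x (Fin.succ i) ^ 2 + 1 * (∑ i, x (Fin.succ i)) ^ 2 = 0
    linear_combination hs2 - (x 0 - ∑ i, x (Fin.succ i)) * hs
  · obtain ⟨u, hu⟩ := u
    rw [sumSqAddMulSqSum, one_mul] at hu
    simp only [Fin.sum_univ_succ, Fin.cons_zero, Fin.cons_succ]
    exact ⟨by ring, by linear_combination hu⟩
  · rintro ⟨x, hs, -⟩
    rw [Fin.sum_univ_succ] at hs
    change x 0 + ∑ i, Fin.tail x i = 0 at hs
    rw [Subtype.mk.injEq, ← eq_neg_of_add_eq_zero_left hs, Fin.cons_self_tail]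

end Reduction

theorem card_local_holomorphic_solutions_char_p_general
    {F : Type*} [Field F] [Fintype F] (p : ℕ) (hodd : Odd p)
    [CharP F p] (t : F) :
    Nat.card {x : Fin (p - 1) → F //
        (∑ j, x j) = -t ∧ (∑ j, (x j) ^ 2) = -t ^ 2} =
      (Fintype.card F) ^ (p - 3) := by
  classical
  obtain ⟨K, rfl⟩ : ∃ K, p = K + 2 := by
    have := CharP.char_ne_one F p
    obtain ⟨m, rfl⟩ := hodd
    exact ⟨2 * m - 1, by omega⟩
  have hK : Odd K := by simpa [Nat.odd_add] using hodd
  have hF : ringChar F ≠ 2 := by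
    rw [ringChar.eq F (K + 2)]
    have := hK.pos
    omega
  have hcard : ((K + 1 : ℕ) : F) = -1 := by
    have h := CharP.cast_eq_zero F (K + 2)
    push_cast at h ⊢
    linear_combination h
  have hc : ∀ j ≤ K, (1 + j * 1 : F) ≠ 0 := fun j hj => by
    rw [mul_one, ← Nat.cast_one, ← Nat.cast_add, Ne, CharP.cast_eq_zero_iff F (K + 2)]
    exact fun h => absurd (Nat.le_of_dvd (by omega) h) (by omega)
  rw [show K + 2 - 1 = K + 1 from rfl,
    natCard_sum_eq_neg_and_sum_sq_eq_neg_sq (by simpa using hcard),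
    natCard_sum_eq_zero_and_sum_sq_eq_zero, card_filter_sumSqAddMulSqSum_eq_zero hF hK hc,
    show K + 2 - 3 = K - 1 from rfl]

/-- for an odd prime `p`, a finite field `F_q` of characteristic `p`
(so `q` is a power of `p`), and `t ∈ F_q`, the number of `(p-1)`-tuples
`(x₁, …, x_{p-1})` with `∑ xⱼ = -t` and `∑ xⱼ² = -t²` equals `q^(p-3)`.
(These tuples are exactly the local solutions at `e₁` of the holomorphicity equations
in a `p`-regular tree, for adjacent vertices `e₀ ~ e₁` with prescribed values `s` at
`e₀` and `u` at `e₁`, where `t = u - s`.) -/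
theorem card_local_holomorphic_solutions_char_p
    {F : Type*} [Field F] [Fintype F] (p : ℕ) (hp : p.Prime) (hodd : Odd p)
    [CharP F p] (t : F) :
    Nat.card {x : Fin (p - 1) → F //
        (∑ j, x j) = -t ∧ (∑ j, (x j) ^ 2) = -t ^ 2} =
      (Fintype.card F) ^ (p - 3) :=
  card_local_holomorphic_solutions_char_p_general p hodd t
end

section
/- Let q = 3^n for some n ≥ 1 and let G be a tree in which every vertex has degree 3. If φ and ψ are F_q-valued holomorphic functions on G that agree at two adjacent vertices e₀ ~ e₁ (φ(e₀) = ψ(e₀) and φ(e₁) = ψ(e₁)), then φ = ψ. In particular, there are at most q² distinct F_q-valued holomorphic functions on G. -/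
/-! In characteristic 3, harmonicity of `f` and `f²` at a vertex of degree 3 says that the three
neighbouring values have vanishing sum and vanishing sum of squares, which forces them to be equal.
So a holomorphic function is constant on every neighbourhood; on a connected graph the values at
two adjacent vertices then propagate along walks to determine the function. -/

section CharThree

variable {R : Type*} [CommRing R] [IsReduced R]

theorem eq_of_add_add_eq_zero_of_sq_add_sq_add_sq_eq_zero (h3 : (3 : R) = 0) {a b c : R}
    (hsum : a + b + c = 0) (hsq : a ^ 2 + b ^ 2 + c ^ 2 = 0) : a = b := by
  have hsq_sub : (a - b) ^ 2 = 0 := by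
    linear_combination 2 * hsq + (c - a - b) * hsum - c ^ 2 * h3
  exact sub_eq_zero.mp (eq_zero_of_pow_eq_zero hsq_sub)

theorem Finset.apply_eq_apply_of_card_eq_three {ι : Type*} {s : Finset ι} (hs : s.card = 3)
    (h3 : (3 : R) = 0) {g : ι → R} (hsum : ∑ i ∈ s, g i = 0) (hsq : ∑ i ∈ s, g i ^ 2 = 0)
    {i j : ι} (hi : i ∈ s) (hj : j ∈ s) : g i = g j := by
  classical
  obtain ⟨a, b, c, hab, hac, hbc, rfl⟩ := Finset.card_eq_three.mp hs
  simp only [Finset.sum_insert, Finset.mem_insert, Finset.mem_singleton, Finset.sum_singleton,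
    hab, hac, hbc, or_self, not_false_eq_true, ← add_assoc] at hsum hsq
  have hb : g a = g b := eq_of_add_add_eq_zero_of_sq_add_sq_add_sq_eq_zero h3 hsum hsq
  have hc : g a = g c := eq_of_add_add_eq_zero_of_sq_add_sq_add_sq_eq_zero (b := g c) (c := g b)
    h3 (by linear_combination hsum) (by linear_combination hsq)
  have h_eq_a : ∀ k ∈ ({a, b, c} : Finset ι), g k = g a := by
    simp only [Finset.mem_insert, Finset.mem_singleton]
    rintro k (hk | hk | hk) <;> rw [hk]
    exacts [hb.symm, hc.symm]
  rw [h_eq_a i hi, h_eq_a j hj]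

end CharThree

namespace SimpleGraph

variable {V : Type*} {G : SimpleGraph V}

theorem IsHarmonic.sum_neighborFinset {R : Type*} [CommRing R] [G.LocallyFinite] {f : V → R}
    (hf : G.IsHarmonic f) (x : V) : ∑ y ∈ G.neighborFinset x, f y = G.degree x * f x := by
  have h := hf x
  rwa [Finset.sum_sub_distrib, Finset.sum_const, card_neighborFinset_eq_degree, nsmul_eq_mul,
    sub_eq_zero] at h

theorem IsHolomorphic.apply_eq_apply_of_adj {R : Type*} [CommRing R] [IsReduced R]
    [G.LocallyFinite] (h3 : (3 : R) = 0) {f : V → R} (hf : G.IsHolomorphic f) {x y z : V}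
    (hx : G.degree x = 3) (hy : G.Adj x y) (hz : G.Adj x z) : f y = f z := by
  have hsum := hf.1.sum_neighborFinset x
  have hsq := hf.2.sum_neighborFinset x
  rw [hx, Nat.cast_ofNat, h3, zero_mul] at hsum hsq
  exact Finset.apply_eq_apply_of_card_eq_three hx h3 hsum hsq
    ((mem_neighborFinset G x y).mpr hy) ((mem_neighborFinset G x z).mpr hz)

theorem Preconnected.eq_of_apply_eq_of_adj {α : Type*} (hG : G.Preconnected) {φ ψ : V → α}
    (hφ : ∀ ⦃x y z⦄, G.Adj x y → G.Adj x z → φ y = φ z)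
    (hψ : ∀ ⦃x y z⦄, G.Adj x y → G.Adj x z → ψ y = ψ z)
    {e₀ e₁ : V} (hadj : G.Adj e₀ e₁) (h0 : φ e₀ = ψ e₀) (h1 : φ e₁ = ψ e₁) : φ = ψ := by
  let agreesNear : V → Prop := fun v => φ v = ψ v ∧ ∀ y, G.Adj v y → φ y = ψ y
  have base : agreesNear e₀ := ⟨h0, fun y hy => by rw [hφ hy hadj, h1, hψ hy hadj]⟩
  have step {u w : V} (huw : G.Adj u w) (hu : agreesNear u) : agreesNear w :=
    ⟨hu.2 w huw, fun y hy => by rw [hφ hy huw.symm, hu.1, hψ hy huw.symm]⟩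
  have agrees_of_reach {v : V} (h : Relation.ReflTransGen G.Adj e₀ v) : agreesNear v := by
    induction h with
    | refl => exact base
    | tail _ huv ih => exact step huv ih
  funext v
  exact (agrees_of_reach ((reachable_iff_reflTransGen e₀ v).mp (hG e₀ v))).1

end SimpleGraph

theorem holomorphic_eq_of_agree_adjacent_deg_three_general
    {V : Type*} (G : SimpleGraph V) [G.LocallyFinite]
    (htree : G.IsTree) (hdeg : ∀ v : V, G.degree v = 3)
    {F : Type*} [Field F] [Fintype F] (n : ℕ)
    (hcard : Fintype.card F = 3 ^ n)
    (φ ψ : V → F) (hφ : G.IsHolomorphic φ) (hψ : G.IsHolomorphic ψ)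
    (e₀ e₁ : V) (hadj : G.Adj e₀ e₁) (h0 : φ e₀ = ψ e₀) (h1 : φ e₁ = ψ e₁) :
    φ = ψ ∧ Nat.card {f : V → F // G.IsHolomorphic f} ≤ (Fintype.card F) ^ 2 := by
  have h3 : (3 : F) = 0 :=
    eq_zero_of_pow_eq_zero (n := n) (by exact_mod_cast hcard ▸ FiniteField.cast_card_eq_zero F)
  have holo_eq {f g : V → F} (hf : G.IsHolomorphic f) (hg : G.IsHolomorphic g)
      (h0 : f e₀ = g e₀) (h1 : f e₁ = g e₁) : f = g :=
    htree.connected.preconnected.eq_of_apply_eq_of_adj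
      (fun x _ _ => hf.apply_eq_apply_of_adj h3 (hdeg x))
      (fun x _ _ => hg.apply_eq_apply_of_adj h3 (hdeg x)) hadj h0 h1
  refine ⟨holo_eq hφ hψ h0 h1, ?_⟩
  have hinj : Function.Injective
      (fun f : {f : V → F // G.IsHolomorphic f} => (f.1 e₀, f.1 e₁)) :=
    fun f g hfg => Subtype.ext (holo_eq f.2 g.2 (Prod.ext_iff.mp hfg).1 (Prod.ext_iff.mp hfg).2)
  calc Nat.card {f : V → F // G.IsHolomorphic f} ≤ Nat.card (F × F) :=
        Nat.card_le_card_of_injective _ hinj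
    _ = Fintype.card F ^ 2 := by rw [Nat.card_prod, Nat.card_eq_fintype_card, sq]

/-- on a tree in which every vertex has degree 3, two `F_{3^n}`-valued
holomorphic functions agreeing at two adjacent vertices are equal; in particular there
are at most `q²` holomorphic functions (`q = 3^n`). -/
theorem holomorphic_eq_of_agree_adjacent_deg_three
    {V : Type*} (G : SimpleGraph V) [G.LocallyFinite]
    (htree : G.IsTree) (hdeg : ∀ v : V, G.degree v = 3)
    {F : Type*} [Field F] [Fintype F] (n : ℕ) (hn : 1 ≤ n)
    (hcard : Fintype.card F = 3 ^ n)
    (φ ψ : V → F) (hφ : G.IsHolomorphic φ) (hψ : G.IsHolomorphic ψ)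
    (e₀ e₁ : V) (hadj : G.Adj e₀ e₁) (h0 : φ e₀ = ψ e₀) (h1 : φ e₁ = ψ e₁) :
    φ = ψ ∧ Nat.card {f : V → F // G.IsHolomorphic f} ≤ (Fintype.card F) ^ 2 :=
  holomorphic_eq_of_agree_adjacent_deg_three_general G htree hdeg n hcard φ ψ hφ hψ e₀ e₁ hadj h0 h1
end

section
/- Let q be an odd prime power and let C_n be the cycle graph on n ≥ 3 vertices. Then every F_q-valued holomorphic function on C_n is constant. -/
/-- every `F_q`-valued holomorphic function (`q` an odd prime power) on the
cycle graph `C_n`, `n ≥ 3`, is constant. -/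
theorem holomorphic_on_cycleGraph_isConstant
    {F : Type*} [Field F] [Fintype F] (hq : Odd (Fintype.card F))
    (n : ℕ) (hn : 3 ≤ n) (φ : Fin n → F)
    (hφ : (SimpleGraph.cycleGraph n).IsHolomorphic φ) :
    ∃ c : F, ∀ v : Fin n, φ v = c := by
  obtain ⟨m, rfl⟩ : ∃ m, n = m + 3 := ⟨n - 3, by omega⟩
  -- 2 ≠ 0 in F
  have h2 : (2 : F) ≠ 0 := by
    intro h
    have hdvd : ringChar F ∣ 2 := (ringChar.spec F 2).mp (by exact_mod_cast h)
    have hp : (ringChar F).Prime := CharP.char_is_prime F (ringChar F)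
    have hchar : ringChar F = 2 := by
      rcases (Nat.dvd_prime Nat.prime_two).mp hdvd with h1 | h1
      · exact absurd h1 hp.ne_one
      · exact h1
    obtain ⟨k, hpk, hk⟩ := FiniteField.card F (ringChar F)
    rw [hk, hchar] at hq
    have : Even ((2:ℕ) ^ (k:ℕ)) := (Nat.even_pow).mpr ⟨even_two, k.pos.ne'⟩
    exact (Nat.not_odd_iff_even.mpr this) hq
  -- neighbors distinct
  have hne : ∀ v : Fin (m + 3), v - 1 ≠ v + 1 := by
    intro v h
    have h' := congrArg Fin.val h
    simp [Fin.sub_def, Fin.add_def, Fin.val_one'] at h'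
    have hx := v.is_lt
    rcases Nat.eq_zero_or_pos v.val with h0 | h0
    · rw [h0, Nat.add_zero, Nat.mod_eq_of_lt (by omega), Nat.mod_eq_of_lt (by omega)] at h'
      omega
    · rcases eq_or_lt_of_le (Nat.succ_le_of_lt (by omega : v.val < m + 3)) with hm | hm
      · rw [show m + 2 + v.val = (m + 3) + (m + 1) by omega, Nat.add_mod_left,
          show v.val + 1 = m + 3 by omega, Nat.mod_self,
          Nat.mod_eq_of_lt (by omega)] at h'
        omega
      · rw [show m + 2 + v.val = (m + 3) + (v.val - 1) by omega, Nat.add_mod_left,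
          Nat.mod_eq_of_lt (by omega), Nat.mod_eq_of_lt (by omega)] at h'
        omega
  -- step: φ (v+1) = φ v for all v
  have step : ∀ v : Fin (m + 3), φ (v + 1) = φ v := by
    intro v
    have hA := hφ.1 v
    have hB := hφ.2 v
    rw [SimpleGraph.cycleGraph_neighborFinset, Finset.sum_pair (hne v)] at hA hB
    simp only at hA hB
    have hb' : φ (v - 1) = 2 * φ v - φ (v + 1) := by linear_combination hA
    have hsq : (φ (v + 1) - φ v) ^ 2 * 2 = 0 := by
      linear_combination hB - (φ (v - 1) + 2 * φ v - φ (v + 1)) * hb'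
    have ha0 : (φ (v + 1) - φ v) ^ 2 = 0 := by
      rcases mul_eq_zero.mp hsq with h | h
      · exact h
      · exact absurd h h2
    have := pow_eq_zero_iff (n := 2) (by omega) |>.mp ha0
    exact sub_eq_zero.mp this
  open Fin.NatCast in
  have key : ∀ k : ℕ, φ (k : Fin (m + 3)) = φ 0 := by
    intro k
    induction k with
    | zero => simp
    | succ k ih =>
      have hcast : ((k + 1 : ℕ) : Fin (m + 3)) = (k : Fin (m + 3)) + 1 := by push_cast; ring
      rw [hcast, step, ih]
  exact ⟨φ 0, fun v => by rw [← Fin.cast_val_eq_self v, key]⟩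
end

section
/- Let p > 5 be a prime and let G be a locally finite tree in which every vertex has degree at least 6. Then there exists a nonconstant holomorphic function on G with values in Z/pZ. -/
open Finset Function

theorem Finset.exists_embedding_apply_eq_of_card_le {ι α : Type*} [Fintype ι] [DecidableEq α]
    {s : Finset α} (hs : Fintype.card ι ≤ #s) {a : α} (ha : a ∈ s) (i₀ : ι) :
    ∃ e : ι ↪ α, (∀ i, e i ∈ s) ∧ e i₀ = a := by
  obtain ⟨e, he⟩ := Embedding.exists_of_card_le_finset hs
  have he' : ∀ i, e i ∈ s := fun i => he ⟨i, rfl⟩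
  refine ⟨e.trans (Equiv.swap (e i₀) a).toEmbedding, fun i => ?_, by simp⟩
  simp only [Embedding.trans_apply, Equiv.coe_toEmbedding, Equiv.swap_apply_def]
  split_ifs <;> simp [ha, he']

theorem Finset.sum_comp_extend_zero {ι α M N : Type*} [Fintype ι] [Zero M] [AddCommMonoid N]
    (e : ι ↪ α) (c : ι → M) {s : Finset α} (hs : ∀ i, e i ∈ s) {F : M → N} (hF : F 0 = 0) :
    ∑ a ∈ s, F (extend e c 0 a) = ∑ i, F (c i) := by
  have hsub : univ.map e ⊆ s := fun a ha => by
    obtain ⟨i, -, rfl⟩ := mem_map.1 ha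
    exact hs i
  rw [← sum_subset hsub]
  · simp [e.injective.extend_apply]
  · intro a _ ha
    rw [extend_apply' _ _ _ (by simpa using ha), Pi.zero_apply, hF]

theorem exists_eq_rec_parent {V M : Type*} (μ : V → ℕ) (pa : V → V) (r : V)
    (hμ : ∀ v, v ≠ r → μ (pa v) < μ v) (base : M) (step : V → M → M) :
    ∃ g : V → M, g r = base ∧ ∀ v, v ≠ r → g v = step v (g (pa v)) := by
  classical
  refine ⟨(measure μ).wf.fix fun v rec => if h : v = r then base else step v (rec (pa v) (hμ v h)),
    ?_, fun v hv => ?_⟩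
  · rw [WellFounded.fix_eq, dif_pos rfl]
  · rw [WellFounded.fix_eq, dif_neg hv]

namespace SimpleGraph

variable {V : Type*} {G : SimpleGraph V}

theorem isHolomorphic_iff [G.LocallyFinite] {R : Type*} [CommRing R] {f : V → R} :
    G.IsHolomorphic f ↔ ∀ x, ∑ y ∈ G.neighborFinset x, (f y - f x) = 0 ∧
      ∑ y ∈ G.neighborFinset x, (f y - f x) ^ 2 = 0 := by
  have hsq : ∀ x, ∑ y ∈ G.neighborFinset x, (f y ^ 2 - f x ^ 2) =
      ∑ y ∈ G.neighborFinset x, (f y - f x) ^ 2 +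
        2 * f x * ∑ y ∈ G.neighborFinset x, (f y - f x) := by
    intro x
    rw [mul_sum, ← sum_add_distrib]
    exact sum_congr rfl fun y _ => by ring
  simp only [IsHolomorphic, IsHarmonic, hsq, ← forall_and]
  exact forall_congr' fun x => and_congr_right fun h => by rw [h, mul_zero, add_zero]

theorem IsAcyclic.eq_penultimate_of_adj_of_dist_lt (hG : G.IsAcyclic) {r v w : V}
    {p : G.Walk r v} (hp : p.IsPath) (hadj : G.Adj v w) (hw : G.dist r w < G.dist r v) :
    w = p.penultimate := by
  classical
  obtain ⟨q, hq, hq_len⟩ := (p.reachable.trans hadj.reachable).exists_path_of_dist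
  have hv : v ∉ q.support := fun hv => by
    have := (dist_le (q.takeUntil v hv)).trans (q.length_takeUntil_le_length hv)
    omega
  exact hG.eq_penultimate_of_adj_end hp hadj
    (hG.mem_support_of_ne_mem_support_of_adj_of_isPath hp hq hadj hv)

theorem IsTree.existsUnique_adj_dist_lt (hG : G.IsTree) {r v : V} (hv : v ≠ r) :
    ∃! w, G.Adj v w ∧ G.dist r w < G.dist r v := by
  obtain ⟨p, hp, hp_len⟩ := hG.connected.exists_path_of_dist r v
  have hnil : ¬p.Nil := fun h => hv h.eq.symm
  refine ⟨p.penultimate, ⟨(p.adj_penultimate hnil).symm, ?_⟩, fun w ⟨hadj, hw⟩ =>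
    hG.isAcyclic.eq_penultimate_of_adj_of_dist_lt hp hadj hw⟩
  have := dist_le p.dropLast
  have := p.length_dropLast_add_one hnil
  omega

theorem exists_embedding_neighborFinset [G.LocallyFinite] {ι : Type*} [Fintype ι]
    (hdeg : ∀ v, Fintype.card ι ≤ G.degree v) {r : V} {pa : V → V}
    (hpa : ∀ v, v ≠ r → G.Adj v (pa v)) (i₀ : ι) :
    ∃ e : V → ι ↪ V, (∀ u i, e u i ∈ G.neighborFinset u) ∧ ∀ u, u ≠ r → e u i₀ = pa u := by
  classical
  suffices ∀ u, ∃ e : ι ↪ V, (∀ i, e i ∈ G.neighborFinset u) ∧ (u ≠ r → e i₀ = pa u) by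
    choose e he he₀ using this
    exact ⟨e, he, he₀⟩
  intro u
  have hcard := (hdeg u).trans_eq (G.card_neighborFinset_eq_degree u).symm
  by_cases hu : u = r
  · obtain ⟨e, he⟩ := Embedding.exists_of_card_le_finset hcard
    exact ⟨e, fun i => he ⟨i, rfl⟩, absurd hu⟩
  · obtain ⟨e, he, he₀⟩ :=
      exists_embedding_apply_eq_of_card_le hcard ((mem_neighborFinset _ _ _).2 (hpa u hu)) i₀
    exact ⟨e, he, fun _ => he₀⟩

theorem IsTree.exists_nonconstant_isHolomorphic [G.LocallyFinite] {R ι : Type*} [CommRing R]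
    [Nontrivial R] [Fintype ι] (hG : G.IsTree) (hdeg : ∀ v, Fintype.card ι ≤ G.degree v)
    (c : ι → R) (hc₁ : ∑ i, c i = 0) (hc₂ : ∑ i, c i ^ 2 = 0) {i₀ : ι} (hi₀ : c i₀ = -1) :
    ∃ f : V → R, G.IsHolomorphic f ∧ ∃ a b, f a ≠ f b := by
  obtain ⟨r⟩ := hG.connected.nonempty
  choose! pa hpa hpa_unique using fun v (hv : v ≠ r) => hG.existsUnique_adj_dist_lt hv
  have hpa_eq : ∀ u w, G.Adj u w → G.dist r w < G.dist r u → pa u = w := fun u w hadj hlt =>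
    (hpa_unique u (by rintro rfl; simp at hlt) w ⟨hadj, hlt⟩).symm
  obtain ⟨e, he, he₀⟩ := exists_embedding_neighborFinset hdeg (fun v hv => (hpa v hv).1) i₀
  obtain ⟨g, hg_r, hg⟩ := exists_eq_rec_parent (G.dist r) pa r (fun v hv => (hpa v hv).2)
    (1 : R) fun v m => m * extend (e (pa v)) c 0 v
  obtain ⟨f, -, hf⟩ := exists_eq_rec_parent (G.dist r) pa r (fun v hv => (hpa v hv).2)
    (0 : R) fun v m => m + g v
  have hdiff : ∀ u w, G.Adj u w → f w - f u = g u * extend (e u) c 0 w := by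
    intro u w hadj
    rcases lt_or_gt_of_ne (hG.dist_ne_of_adj r hadj) with hlt | hlt
    · have hw : w ≠ r := by rintro rfl; simp at hlt
      obtain rfl := hpa_eq w u hadj.symm hlt
      rw [hf w hw, hg w hw]
      ring
    · have hu : u ≠ r := by rintro rfl; simp at hlt
      obtain rfl := hpa_eq u w hadj hlt
      rw [hf u hu, ← he₀ u hu, (e u).injective.extend_apply, hi₀]
      ring
  have hsum : ∀ u, ∀ F : R → R, F 0 = 0 →
      ∑ w ∈ G.neighborFinset u, F (f w - f u) = ∑ i, F (g u * c i) := by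
    intro u F hF
    rw [sum_congr rfl fun w hw => by rw [hdiff u w ((mem_neighborFinset _ _ _).1 hw)]]
    exact sum_comp_extend_zero (e u) c (he u) (F := fun t => F (g u * t)) (by simp [hF])
  refine ⟨f, isHolomorphic_iff.2 fun u => ⟨?_, ?_⟩, e r i₀, r, ?_⟩
  · simpa [← mul_sum, hc₁] using hsum u id rfl
  · simpa [mul_pow, ← mul_sum, hc₂] using hsum u (· ^ 2) (zero_pow two_ne_zero)
  · rw [← sub_ne_zero, hdiff r _ ((mem_neighborFinset _ _ _).1 (he r i₀)),
      (e r).injective.extend_apply, hg_r, hi₀, one_mul]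
    exact neg_ne_zero.2 one_ne_zero

end SimpleGraph

theorem exists_nonconstant_zmod_holomorphic_of_tree_min_degree_six_general
    {V : Type*} (G : SimpleGraph V) [G.LocallyFinite]
    (htree : G.IsTree) (hdeg : ∀ v : V, 6 ≤ G.degree v)
    (p : ℕ) (hp : p.Prime) :
    ∃ φ : V → ZMod p, G.IsHolomorphic φ ∧ ∃ a b : V, φ a ≠ φ b := by
  have : Fact p.Prime := ⟨hp⟩
  obtain ⟨x, y, hxy⟩ := ZMod.sq_add_sq p (-1)
  refine htree.exists_nonconstant_isHolomorphic (by simpa using hdeg) ![x, -x, y, -y, 1, -1]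
    ?_ ?_ (i₀ := 5) rfl
  · simp [Fin.sum_univ_succ]
  · simp [Fin.sum_univ_succ]
    linear_combination 2 * hxy

/-- on a locally finite tree in which every vertex has degree at least 6,
there is a nonconstant holomorphic function with values in `ℤ/pℤ` for any prime `p > 5`. -/
theorem exists_nonconstant_zmod_holomorphic_of_tree_min_degree_six
    {V : Type*} (G : SimpleGraph V) [G.LocallyFinite]
    (htree : G.IsTree) (hdeg : ∀ v : V, 6 ≤ G.degree v)
    (p : ℕ) (hp : p.Prime) (hp5 : 5 < p) :
    ∃ φ : V → ZMod p, G.IsHolomorphic φ ∧ ∃ a b : V, φ a ≠ φ b :=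
  exists_nonconstant_zmod_holomorphic_of_tree_min_degree_six_general G htree hdeg p hp
end

section
/- Let G be a tree in which every vertex has degree 3, let s and t be adjacent vertices of G, and let α, β ∈ ℂ with α ≠ β. Then the group of graph automorphisms of G that fix both s and t acts simply transitively (freely and transitively) on the set of ℂ-valued holomorphic functions φ on G with φ(s) = α and φ(t) = β, via φ ↦ φ ∘ g. In particular this set of holomorphic functions is nonempty and in bijection with the automorphism group fixing s and t. -/
/-!
At a vertex `x` of degree 3 with neighbours `y, a, b`, the conditions `Δf(x) = 0` and
`Δ(f²)(x) = 0` say that the differences `f y - f x`, `f a - f x`, `f b - f x` have vanishing sum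
and vanishing sum of squares, i.e. they are `d, ω d, ω² d` in some order, where `ω` is a primitive
cube root of unity. Hence, once `f s ≠ f t`, `f` is injective on every neighbourhood, and its
values on the neighbours of `x` are determined by `f x` and its value at one neighbour.

Hanging the tree from the edge `st`, this yields a holomorphic function with `f s = α`, `f t = β`
(choose at each vertex which child gets the multiplier `ω`), and, for two such functions `φ, ψ`,
a graph homomorphism `g` with `φ ∘ g = ψ`, built outwards from `s`. A homomorphism out of a
connected graph is determined by its value at `s` and its composite with a function injective on
neighbourhoods; so the homomorphisms for `(φ, ψ)` and `(ψ, φ)` are mutually inverse, and the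
resulting automorphism is the only one.
-/

namespace IsPrimitiveRoot

variable {K : Type*} [Field K] {ω : K}

theorem sq_add_self_add_one (hω : IsPrimitiveRoot ω 3) : ω ^ 2 + ω + 1 = 0 := by
  have h := hω.geom_sum_eq_zero (by norm_num)
  simp only [Finset.sum_range_succ, Finset.sum_range_zero] at h
  linear_combination h

theorem add_mul_add_mul_sq_eq_zero (hω : IsPrimitiveRoot ω 3) (d : K) :
    d + ω * d + ω ^ 2 * d = 0 ∧ d ^ 2 + (ω * d) ^ 2 + (ω ^ 2 * d) ^ 2 = 0 := by
  have h := hω.sq_add_self_add_one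
  have h3 : ω ^ 3 = 1 := hω.pow_eq_one
  exact ⟨by linear_combination d * h, by linear_combination d ^ 2 * h + d ^ 2 * ω * h3⟩

theorem eq_mul_or_eq_mul_sq_of_add_add_eq_zero [NeZero (2 : K)] (hω : IsPrimitiveRoot ω 3)
    {d a b : K} (h₁ : d + a + b = 0) (h₂ : d ^ 2 + a ^ 2 + b ^ 2 = 0) :
    (a = ω * d ∧ b = ω ^ 2 * d) ∨ (a = ω ^ 2 * d ∧ b = ω * d) := by
  have h := hω.sq_add_self_add_one
  have h3 : ω ^ 3 = 1 := hω.pow_eq_one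
  have hab : 2 * ((a - ω * d) * (a - ω ^ 2 * d)) = 0 := by
    linear_combination h₂ - (b - a - d) * h₁ - 2 * a * d * h + 2 * d ^ 2 * h3
  rcases mul_eq_zero.mp ((mul_eq_zero.mp hab).resolve_left two_ne_zero) with ha | ha
  · left
    exact ⟨by linear_combination ha, by linear_combination h₁ - ha - d * h⟩
  · right
    exact ⟨by linear_combination ha, by linear_combination h₁ - ha - d * h⟩

end IsPrimitiveRoot

namespace SimpleGraph

variable {V : Type*} {G : SimpleGraph V}

theorem Preconnected.induction_on_adj (hG : G.Preconnected) {P : V → Prop} {s : V} (hs : P s)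
    (h : ∀ ⦃u v⦄, G.Adj u v → P u → P v) (v : V) : P v := by
  obtain ⟨p⟩ := hG s v
  induction p with
  | nil => exact hs
  | cons huv _ ih => exact ih (h huv hs)

theorem Preconnected.hom_ext_of_comp_eq {W X : Type*} {H : SimpleGraph W} (hG : G.Preconnected)
    {φ : W → X} (hφ : ∀ w, Set.InjOn φ (H.neighborSet w)) {g₁ g₂ : G →g H} {s : V}
    (hs : g₁ s = g₂ s) (h : φ ∘ g₁ = φ ∘ g₂) : g₁ = g₂ :=
  RelHom.ext <| hG.induction_on_adj hs fun u v huv hu =>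
    hφ (g₁ u) (g₁.map_adj huv) (by rw [hu]; exact g₂.map_adj huv) (congrFun h v)

theorem exists_neighborFinset_eq_of_degree_eq_three [G.LocallyFinite] [DecidableEq V] {x y a : V}
    (hdeg : G.degree x = 3) (hy : G.Adj x y) (ha : G.Adj x a) (hya : y ≠ a) :
    ∃ b, G.neighborFinset x = {y, a, b} ∧ y ≠ b ∧ a ≠ b := by
  have ha' : a ∈ (G.neighborFinset x).erase y := by simp [ha, hya.symm]
  have hcard : (((G.neighborFinset x).erase y).erase a).card = 1 := by
    rw [Finset.card_erase_of_mem ha', Finset.card_erase_of_mem (by simpa),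
      card_neighborFinset_eq_degree, hdeg]
  obtain ⟨b, hb⟩ := Finset.card_eq_one.mp hcard
  have hb' : b ∈ ((G.neighborFinset x).erase y).erase a := hb ▸ Finset.mem_singleton_self b
  refine ⟨b, ?_, (Finset.ne_of_mem_erase (Finset.mem_of_mem_erase hb')).symm,
    (Finset.ne_of_mem_erase hb').symm⟩
  rw [← hb, Finset.insert_erase ha', Finset.insert_erase (by simpa)]

section Rooted

-- `G` hung from the edge `st`: the parent of `v ≠ s` is its neighbour closer to `s`, and the
-- parent of `s` is `t`.
variable (G) in
open Classical in
noncomputable def parent (s t v : V) : V :=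
  haveI : Nonempty V := ⟨t⟩
  if v = s then t else Classical.epsilon fun u => G.Adj u v ∧ G.dist s u + 1 = G.dist s v

theorem parent_self (s t : V) : G.parent s t s = t := if_pos rfl

theorem Connected.exists_adj_dist_add_one (hG : G.Connected) {s v : V} (hv : v ≠ s) :
    ∃ u, G.Adj u v ∧ G.dist s u + 1 = G.dist s v := by
  obtain ⟨p, hp⟩ := hG.exists_walk_length_eq_dist s v
  have hnil : ¬p.Nil := fun h => hv h.eq.symm
  have hadj := p.adj_penultimate hnil
  refine ⟨p.penultimate, hadj, le_antisymm ?_ ?_⟩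
  · have := G.dist_le p.dropLast
    have := p.length_dropLast_add_one hnil
    omega
  · have := hadj.reachable.dist_triangle_right s
    rwa [dist_eq_one_iff_adj.mpr hadj] at this

theorem Connected.parent_spec (hG : G.Connected) {s v : V} (t : V) (hv : v ≠ s) :
    G.Adj (G.parent s t v) v ∧ G.dist s (G.parent s t v) + 1 = G.dist s v := by
  rw [parent, if_neg hv]
  exact Classical.epsilon_spec (hG.exists_adj_dist_add_one hv)

theorem Connected.adj_parent (hG : G.Connected) {s t : V} (hst : G.Adj s t) (v : V) :
    G.Adj (G.parent s t v) v := by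
  by_cases hv : v = s
  · rw [hv, parent_self]
    exact hst.symm
  · exact (hG.parent_spec t hv).1

theorem IsTree.eq_of_adj_of_dist_add_one (hG : G.IsTree) {s u u' v : V} (hu : G.Adj u v)
    (hu' : G.Adj u' v) (hd : G.dist s u + 1 = G.dist s v) (hd' : G.dist s u' + 1 = G.dist s v) :
    u = u' := by
  classical
  have hpath : ∀ {w}, G.dist s w + 1 = G.dist s v → ∃ p : G.Walk s w, p.IsPath ∧ v ∉ p.support := by
    intro w hw
    obtain ⟨p, hp, hlen⟩ := hG.connected.exists_path_of_dist s w
    refine ⟨p, hp, fun hv => ?_⟩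
    have := (G.dist_le (p.takeUntil v hv)).trans (p.length_takeUntil_le_length hv)
    omega
  obtain ⟨p, hp, hvp⟩ := hpath hd
  obtain ⟨p', hp', hvp'⟩ := hpath hd'
  have hq := hp.concat hvp hu
  -- by acyclicity `u'` lies on the path `p ++ [v]`, so it is its penultimate vertex `u`
  have hu'q := hG.isAcyclic.mem_support_of_ne_mem_support_of_adj_of_isPath hq hp' hu'.symm hvp'
  simpa using (hG.isAcyclic.eq_penultimate_of_adj_end hq hu'.symm hu'q).symm

theorem IsTree.parent_eq_of_adj (hG : G.IsTree) {s u v : V} (t : V) (h : G.Adj u v)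
    (hd : G.dist s u + 1 = G.dist s v) : G.parent s t v = u := by
  have hv : v ≠ s := by
    rintro rfl
    simp at hd
  exact hG.eq_of_adj_of_dist_add_one (hG.connected.parent_spec t hv).1 h
    (hG.connected.parent_spec t hv).2 hd

theorem IsTree.parent_eq_or_parent_eq_of_adj (hG : G.IsTree) {s u v : V} (t : V)
    (h : G.Adj u v) : (v ≠ s ∧ G.parent s t v = u) ∨ (u ≠ s ∧ G.parent s t u = v) := by
  rcases hG.dist_eq_dist_add_one_of_adj s h with hd | hd
  · refine .inr ⟨?_, hG.parent_eq_of_adj t h.symm hd.symm⟩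
    rintro rfl
    simp at hd
  · refine .inl ⟨?_, hG.parent_eq_of_adj t h hd.symm⟩
    rintro rfl
    simp at hd

variable (G) in
open Classical in
noncomputable def parentRec {X : Sort*} (hG : G.Connected) (s t : V) (x₀ : X)
    (step : V → X → X) (v : V) : X :=
  if v = s then x₀ else step v (parentRec hG s t x₀ step (G.parent s t v))
termination_by G.dist s v
decreasing_by have := (hG.parent_spec t ‹_›).2; omega

theorem parentRec_self {X : Sort*} (hG : G.Connected) (s t : V) (x₀ : X) (step : V → X → X) :
    G.parentRec hG s t x₀ step s = x₀ := by
  rw [parentRec, if_pos rfl]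

theorem parentRec_of_ne {X : Sort*} (hG : G.Connected) {s v : V} (t : V) (x₀ : X)
    (step : V → X → X) (hv : v ≠ s) :
    G.parentRec hG s t x₀ step v = step v (G.parentRec hG s t x₀ step (G.parent s t v)) := by
  rw [parentRec, if_neg hv]

end Rooted

theorem IsTree.exists_hom_comp_eq {W X : Type*} {H : SimpleGraph W} (hG : G.IsTree)
    {ψ : V → X} {φ : W → X}
    (hlift : ∀ ⦃x y : V⦄ ⦃x' y' : W⦄, G.Adj x y → H.Adj x' y' → ψ x = φ x' → ψ y = φ y' →
      ψ '' G.neighborSet x ⊆ φ '' H.neighborSet x')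
    {s t : V} (hst : G.Adj s t) {s' t' : W} (hst' : H.Adj s' t') (hs : ψ s = φ s')
    (ht : ψ t = φ t') : ∃ g : G →g H, g s = s' ∧ φ ∘ g = ψ := by
  have : Nonempty W := ⟨s'⟩
  set g := G.parentRec hG.connected s t s'
    fun v w' => Classical.epsilon fun w => H.Adj w' w ∧ φ w = ψ v
  have hgs : g s = s' := parentRec_self ..
  have key : ∀ v, φ (g v) = ψ v ∧ (v ≠ s → H.Adj (g (G.parent s t v)) (g v)) := by
    intro v
    induction v using (measure (G.dist s)).wf.induction with
    | h v ih => ?_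
    by_cases hv : v = s
    · subst hv
      exact ⟨by rw [hgs, hs], fun h => (h rfl).elim⟩
    obtain ⟨hp_adj, hp_dist⟩ := hG.connected.parent_spec t hv
    set p := G.parent s t v
    have hp_lt : G.dist s p < G.dist s v := by omega
    obtain ⟨y, y', hpy, hpy', hy⟩ : ∃ y y', G.Adj p y ∧ H.Adj (g p) y' ∧ ψ y = φ y' := by
      by_cases hps : p = s
      · exact ⟨t, t', hps ▸ hst, by rw [hps, hgs]; exact hst', ht⟩
      · have hpp : G.dist s (G.parent s t p) < G.dist s v := by
          have := (hG.connected.parent_spec t hps).2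
          omega
        exact ⟨G.parent s t p, g (G.parent s t p), (hG.connected.adj_parent hst p).symm,
          ((ih p hp_lt).2 hps).symm, (ih _ hpp).1.symm⟩
    have hex : ∃ w, H.Adj (g p) w ∧ φ w = ψ v :=
      hlift hpy hpy' (ih p hp_lt).1.symm hy
        (Set.mem_image_of_mem ψ hp_adj)
    have hgv : g v = Classical.epsilon fun w => H.Adj (g p) w ∧ φ w = ψ v :=
      parentRec_of_ne _ _ _ _ hv
    rw [hgv]
    exact ⟨(Classical.epsilon_spec hex).2, fun _ => (Classical.epsilon_spec hex).1⟩
  refine ⟨⟨g, fun {u v} huv => ?_⟩, hgs, funext fun v => (key v).1⟩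
  rcases hG.parent_eq_or_parent_eq_of_adj (s := s) t huv with ⟨hv, rfl⟩ | ⟨hu, rfl⟩
  exacts [(key v).2 hv, ((key u).2 hu).symm]

variable {R : Type*} [CommRing R]

variable (G) in
def IsHolomorphicAt [G.LocallyFinite] (f : V → R) (x : V) : Prop :=
  ∑ y ∈ G.neighborFinset x, (f y - f x) = 0 ∧ ∑ y ∈ G.neighborFinset x, (f y ^ 2 - f x ^ 2) = 0

theorem isHolomorphic_iff_forall_isHolomorphicAt [G.LocallyFinite] {f : V → R} :
    G.IsHolomorphic f ↔ ∀ x, G.IsHolomorphicAt f x :=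
  forall_and.symm

theorem IsHarmonic.comp_iso {W : Type*} {H : SimpleGraph W} [G.LocallyFinite] [H.LocallyFinite]
    {f : W → R} (hf : H.IsHarmonic f) (e : G ≃g H) : G.IsHarmonic (f ∘ e) := fun x => by
  rw [← hf (e x)]
  refine Finset.sum_nbij' e e.symm (fun y hy => ?_) (fun z hz => ?_) (by simp) (by simp) (by simp)
  · rw [mem_neighborFinset] at hy ⊢
    exact e.map_adj_iff.mpr hy
  · rw [mem_neighborFinset] at hz ⊢
    rwa [← e.map_adj_iff, e.apply_symm_apply]

theorem IsHolomorphic.comp_iso {W : Type*} {H : SimpleGraph W} [G.LocallyFinite]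
    [H.LocallyFinite] {f : W → R} (hf : H.IsHolomorphic f) (e : G ≃g H) :
    G.IsHolomorphic (f ∘ e) :=
  ⟨hf.1.comp_iso e, hf.2.comp_iso e⟩

theorem isHolomorphicAt_iff_of_neighborFinset_eq [G.LocallyFinite] [DecidableEq V] {f : V → R}
    {x y a b : V} (hN : G.neighborFinset x = {y, a, b}) (hya : y ≠ a) (hyb : y ≠ b) (hab : a ≠ b) :
    G.IsHolomorphicAt f x ↔ (f y - f x) + (f a - f x) + (f b - f x) = 0 ∧
      (f y - f x) ^ 2 + (f a - f x) ^ 2 + (f b - f x) ^ 2 = 0 := by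
  simp only [IsHolomorphicAt, hN,
    Finset.sum_insert (show y ∉ ({a, b} : Finset V) by simp [hya, hyb]),
    Finset.sum_insert (show a ∉ ({b} : Finset V) by simp [hab]), Finset.sum_singleton]
  constructor <;> rintro ⟨h₁, h₂⟩
  · exact ⟨by linear_combination h₁, by linear_combination h₂ - 2 * f x * h₁⟩
  · exact ⟨by linear_combination h₁, by linear_combination h₂ + 2 * f x * h₁⟩

variable {K : Type*} [Field K] {ω : K}

theorem isHolomorphicAt_of_neighborFinset_eq [G.LocallyFinite] [DecidableEq V]
    (hω : IsPrimitiveRoot ω 3) {f : V → K} {x y a b : V} (hN : G.neighborFinset x = {y, a, b})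
    (hya : y ≠ a) (hyb : y ≠ b) (hab : a ≠ b) (ha : f a = f x + ω * (f y - f x))
    (hb : f b = f x + ω ^ 2 * (f y - f x)) : G.IsHolomorphicAt f x := by
  rw [isHolomorphicAt_iff_of_neighborFinset_eq hN hya hyb hab, ha, hb, add_sub_cancel_left,
    add_sub_cancel_left]
  exact hω.add_mul_add_mul_sq_eq_zero _

theorem IsHolomorphicAt.exists_neighborFinset_eq [NeZero (2 : K)] [G.LocallyFinite]
    [DecidableEq V] (hω : IsPrimitiveRoot ω 3) {f : V → K} {x y : V} (hf : G.IsHolomorphicAt f x)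
    (hdeg : G.degree x = 3) (hy : G.Adj x y) :
    ∃ a b, G.neighborFinset x = {y, a, b} ∧ y ≠ a ∧ y ≠ b ∧ a ≠ b ∧
      f a = f x + ω * (f y - f x) ∧ f b = f x + ω ^ 2 * (f y - f x) := by
  obtain ⟨a, ha, hay⟩ :=
    (G.neighborFinset x).exists_mem_ne (by rw [card_neighborFinset_eq_degree, hdeg]; norm_num) y
  rw [G.mem_neighborFinset] at ha
  obtain ⟨b, hN, hyb, hab⟩ := exists_neighborFinset_eq_of_degree_eq_three hdeg hy ha hay.symm
  obtain ⟨h₁, h₂⟩ := (isHolomorphicAt_iff_of_neighborFinset_eq hN hay.symm hyb hab).mp hf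
  rcases hω.eq_mul_or_eq_mul_sq_of_add_add_eq_zero h₁ h₂ with ⟨ha', hb'⟩ | ⟨ha', hb'⟩
  · exact ⟨a, b, hN, hay.symm, hyb, hab, by linear_combination ha', by linear_combination hb'⟩
  · exact ⟨b, a, by rw [hN, Finset.pair_comm], hyb, hay.symm, hab.symm,
      by linear_combination hb', by linear_combination ha'⟩

theorem IsHolomorphicAt.image_neighborSet [NeZero (2 : K)] [G.LocallyFinite]
    (hω : IsPrimitiveRoot ω 3) {f : V → K} {x y : V} (hf : G.IsHolomorphicAt f x)
    (hdeg : G.degree x = 3) (hy : G.Adj x y) :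
    f '' G.neighborSet x = {f y, f x + ω * (f y - f x), f x + ω ^ 2 * (f y - f x)} := by
  classical
  obtain ⟨a, b, hN, -, -, -, ha, hb⟩ := hf.exists_neighborFinset_eq hω hdeg hy
  rw [← G.coe_neighborFinset x, hN]
  simp [Set.image_insert_eq, ha, hb]

theorem IsHolomorphicAt.image_neighborSet_eq [NeZero (2 : K)] {W : Type*} {H : SimpleGraph W}
    [G.LocallyFinite] [H.LocallyFinite] (hω : IsPrimitiveRoot ω 3) {f : V → K} {f' : W → K}
    {x y : V} {x' y' : W} (hf : G.IsHolomorphicAt f x) (hf' : H.IsHolomorphicAt f' x')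
    (hdeg : G.degree x = 3) (hdeg' : H.degree x' = 3) (hy : G.Adj x y) (hy' : H.Adj x' y')
    (hx : f x = f' x') (hxy : f y = f' y') : f '' G.neighborSet x = f' '' H.neighborSet x' := by
  rw [hf.image_neighborSet hω hdeg hy, hf'.image_neighborSet hω hdeg' hy', hx, hxy]

theorem IsHolomorphicAt.injOn_neighborSet [NeZero (2 : K)] [G.LocallyFinite]
    (hω : IsPrimitiveRoot ω 3) {f : V → K} {x y : V} (hf : G.IsHolomorphicAt f x)
    (hdeg : G.degree x = 3) (hy : G.Adj x y) (hne : f x ≠ f y) :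
    Set.InjOn f (G.neighborSet x) := by
  classical
  obtain ⟨a, b, hN, hya, hyb, -, ha, hb⟩ := hf.exists_neighborFinset_eq hω hdeg hy
  have hcoef : ∀ μ ν : K, f x + μ * (f y - f x) = f x + ν * (f y - f x) → μ = ν :=
    fun μ ν h => mul_right_cancel₀ (sub_ne_zero.mpr hne.symm) (add_left_cancel h)
  have hfy : f y = f x + 1 * (f y - f x) := by ring
  have h1 : ω ≠ 1 := hω.ne_one (by norm_num)
  have h2 : ω ^ 2 ≠ 1 := hω.pow_ne_one_of_pos_of_lt (by norm_num) (by norm_num)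
  have h12 : ω ≠ ω ^ 2 := fun h =>
    h1 (mul_left_cancel₀ (hω.ne_zero (by norm_num)) (by rw [mul_one, ← sq, ← h]))
  rw [← G.coe_neighborFinset x, hN, Finset.coe_insert, Finset.coe_pair,
    Set.injOn_insert (by simp [hya, hyb]), Set.injOn_pair, Set.image_pair, ha, hb]
  refine ⟨fun h => (h12 (hcoef _ _ h)).elim, ?_⟩
  rintro (h | h)
  exacts [h1 (hcoef 1 ω (by rwa [← hfy])).symm, h2 (hcoef 1 (ω ^ 2) (by rwa [← hfy])).symm]

theorem IsHolomorphicAt.apply_ne_of_adj [NeZero (2 : K)] [G.LocallyFinite]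
    (hω : IsPrimitiveRoot ω 3) {f : V → K} {x y z : V} (hf : G.IsHolomorphicAt f x)
    (hdeg : G.degree x = 3) (hy : G.Adj x y) (hne : f x ≠ f y) (hz : G.Adj x z) : f x ≠ f z := by
  have hfz : f z ∈ f '' G.neighborSet x := Set.mem_image_of_mem f hz
  rw [hf.image_neighborSet hω hdeg hy] at hfz
  have hd : f y - f x ≠ 0 := sub_ne_zero.mpr hne.symm
  have hω₀ : ω ≠ 0 := hω.ne_zero (by norm_num)
  rcases hfz with h | h | h <;> rw [h]
  · exact hne
  · exact fun h' => mul_ne_zero hω₀ hd (left_eq_add.mp h')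
  · exact fun h' => mul_ne_zero (pow_ne_zero 2 hω₀) hd (left_eq_add.mp h')

theorem IsHolomorphic.apply_ne_apply_of_adj [NeZero (2 : K)] [G.LocallyFinite]
    (hω : IsPrimitiveRoot ω 3) (hG : G.Preconnected) (hdeg : ∀ v, G.degree v = 3) {f : V → K}
    (hf : G.IsHolomorphic f) {s t : V} (hst : G.Adj s t) (hne : f s ≠ f t) {u v : V}
    (huv : G.Adj u v) : f u ≠ f v := by
  have hfx := isHolomorphic_iff_forall_isHolomorphicAt.mp hf
  refine hG.induction_on_adj (P := fun x => ∀ z, G.Adj x z → f x ≠ f z)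
    (fun z hz => (hfx s).apply_ne_of_adj hω (hdeg s) hst hne hz) ?_ u v huv
  exact fun x y hxy hx z hz => (hfx y).apply_ne_of_adj hω (hdeg y) hxy.symm (hx y hxy).symm hz

theorem IsHolomorphic.injOn_neighborSet [NeZero (2 : K)] [G.LocallyFinite]
    (hω : IsPrimitiveRoot ω 3) (hG : G.Preconnected) (hdeg : ∀ v, G.degree v = 3) {f : V → K}
    (hf : G.IsHolomorphic f) {s t : V} (hst : G.Adj s t) (hne : f s ≠ f t) (x : V) :
    Set.InjOn f (G.neighborSet x) := by
  obtain ⟨y, hy⟩ := (G.degree_pos_iff_exists_adj x).mp (by rw [hdeg x]; norm_num)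
  exact (isHolomorphic_iff_forall_isHolomorphicAt.mp hf x).injOn_neighborSet hω (hdeg x) hy
    (hf.apply_ne_apply_of_adj hω hG hdeg hst hne hy)

section Construction

variable (G) in
noncomputable def firstChild (s t x : V) : V :=
  haveI : Nonempty V := ⟨x⟩
  Classical.epsilon fun y => G.Adj x y ∧ y ≠ G.parent s t x

theorem firstChild_spec [G.LocallyFinite] {s t x : V} (hdeg : G.degree x = 3) :
    G.Adj x (G.firstChild s t x) ∧ G.firstChild s t x ≠ G.parent s t x := by
  obtain ⟨y, hy, hne⟩ := (G.neighborFinset x).exists_mem_ne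
    (by rw [card_neighborFinset_eq_degree, hdeg]; norm_num) (G.parent s t x)
  exact Classical.epsilon_spec (p := fun y => G.Adj x y ∧ y ≠ G.parent s t x)
    ⟨y, (G.mem_neighborFinset x y).mp hy, hne⟩

-- The holomorphic function `f` built below satisfies
-- `f y - f x = neighborWeight x y * (f (parent x) - f x)` for every neighbour `y` of `x`.
variable (G) in
open Classical in
noncomputable def neighborWeight (ω : K) (s t x y : V) : K :=
  if y = G.parent s t x then 1 else if y = G.firstChild s t x then ω else ω ^ 2

theorem IsTree.exists_sub_eq_mul_sub (hG : G.IsTree) {s t : V} (hst : G.Adj s t)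
    (w : V → V → K) (hw : ∀ x, w x (G.parent s t x) = 1) (α β : K) :
    ∃ f : V → K, f s = α ∧ f t = β ∧
      ∀ x y, G.Adj x y → f y - f x = w x y * (f (G.parent s t x) - f x) := by
  -- `F v = (f v, f (parent v))`
  set F := G.parentRec hG.connected s t (α, β)
    fun v z => (z.1 + w (G.parent s t v) v * (z.2 - z.1), z.1)
  have hFs : F s = (α, β) := parentRec_self ..
  have hF : ∀ v, v ≠ s → F v = ((F (G.parent s t v)).1 +
      w (G.parent s t v) v * ((F (G.parent s t v)).2 - (F (G.parent s t v)).1),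
      (F (G.parent s t v)).1) :=
    fun v hv => parentRec_of_ne _ _ _ _ hv
  have hFt : F t = (β, α) := by
    have hst' := hw s
    rw [parent_self] at hst'
    rw [hF t hst.ne', hG.parent_eq_of_adj t hst (by rw [dist_self, dist_eq_one_iff_adj.mpr hst]),
      hFs, hst']
    simp
  have hsnd : ∀ v, (F v).2 = (F (G.parent s t v)).1 := by
    intro v
    by_cases hv : v = s
    · rw [hv, parent_self, hFs, hFt]
    · rw [hF v hv]
  refine ⟨fun v => (F v).1, by simp [hFs], by simp [hFt], fun x y hxy => ?_⟩
  rcases hG.parent_eq_or_parent_eq_of_adj (s := s) t hxy with ⟨hy, rfl⟩ | ⟨-, rfl⟩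
  · dsimp only
    rw [hF y hy, hsnd]
    ring
  · dsimp only
    rw [hw]
    ring

theorem IsTree.isHolomorphic_of_sub_eq_mul_sub [G.LocallyFinite] (hG : G.IsTree)
    (hdeg : ∀ v, G.degree v = 3) (hω : IsPrimitiveRoot ω 3) {s t : V} (hst : G.Adj s t)
    {f : V → K}
    (hf : ∀ x y, G.Adj x y →
      f y - f x = G.neighborWeight ω s t x y * (f (G.parent s t x) - f x)) :
    G.IsHolomorphic f := by
  classical
  refine isHolomorphic_iff_forall_isHolomorphicAt.mpr fun x => ?_
  obtain ⟨hc, hcp⟩ := firstChild_spec (s := s) (t := t) (hdeg x)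
  obtain ⟨b, hN, hpb, hcb⟩ := exists_neighborFinset_eq_of_degree_eq_three (hdeg x)
    (hG.connected.adj_parent hst x).symm hc hcp.symm
  have hb : G.Adj x b := by
    rw [← G.mem_neighborFinset, hN]
    simp
  refine isHolomorphicAt_of_neighborFinset_eq hω hN hcp.symm hpb hcb ?_ ?_
  · have := hf x _ hc
    simp only [neighborWeight, hcp, if_false, if_true] at this
    linear_combination this
  · have := hf x b hb
    simp only [neighborWeight, hpb.symm, hcb.symm, if_false] at this
    linear_combination this

theorem IsTree.exists_isHolomorphic [G.LocallyFinite] (hG : G.IsTree)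
    (hdeg : ∀ v, G.degree v = 3) (hω : IsPrimitiveRoot ω 3) {s t : V} (hst : G.Adj s t)
    (α β : K) : ∃ f : V → K, G.IsHolomorphic f ∧ f s = α ∧ f t = β := by
  obtain ⟨f, hs, ht, hf⟩ :=
    hG.exists_sub_eq_mul_sub hst (G.neighborWeight ω s t) (fun _ => if_pos rfl) α β
  exact ⟨f, hG.isHolomorphic_of_sub_eq_mul_sub hdeg hω hst hf, hs, ht⟩

end Construction

theorem IsTree.existsUnique_iso_comp_eq [NeZero (2 : K)] [G.LocallyFinite]
    (hω : IsPrimitiveRoot ω 3) (hG : G.IsTree) (hdeg : ∀ v, G.degree v = 3) {φ ψ : V → K}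
    (hφ : G.IsHolomorphic φ) (hψ : G.IsHolomorphic ψ) {s t : V} (hst : G.Adj s t)
    (hs : ψ s = φ s) (ht : ψ t = φ t) (hne : φ s ≠ φ t) :
    ∃! e : G ≃g G, (e s = s ∧ e t = t) ∧ ψ = φ ∘ e := by
  have hG' := hG.connected.preconnected
  have hφinj := hφ.injOn_neighborSet hω hG' hdeg hst hne
  have hψinj := hψ.injOn_neighborSet hω hG' hdeg hst (by rwa [hs, ht])
  have hlift : ∀ {f₁ f₂ : V → K}, G.IsHolomorphic f₁ → G.IsHolomorphic f₂ →
      ∀ ⦃x y x' y'⦄, G.Adj x y → G.Adj x' y' → f₁ x = f₂ x' → f₁ y = f₂ y' →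
        f₁ '' G.neighborSet x ⊆ f₂ '' G.neighborSet x' :=
    fun h₁ h₂ x _ x' _ hxy hxy' hx hy =>
      ((isHolomorphic_iff_forall_isHolomorphicAt.mp h₁ x).image_neighborSet_eq hω
        (isHolomorphic_iff_forall_isHolomorphicAt.mp h₂ x') (hdeg x) (hdeg x') hxy hxy' hx hy).le
  obtain ⟨g, hgs, hg⟩ := hG.exists_hom_comp_eq (hlift hψ hφ) hst hst hs ht
  obtain ⟨h, hhs, hh⟩ := hG.exists_hom_comp_eq (hlift hφ hψ) hst hst hs.symm ht.symm
  have hgh : ∀ v, g (h v) = v := DFunLike.congr_fun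
    (hG'.hom_ext_of_comp_eq (g₁ := g.comp h) (g₂ := .id) hφinj (s := s) (by simp [hgs, hhs])
      (funext fun v => (congrFun hg (h v)).trans (congrFun hh v)))
  have hhg : ∀ v, h (g v) = v := DFunLike.congr_fun
    (hG'.hom_ext_of_comp_eq (g₁ := h.comp g) (g₂ := .id) hψinj (s := s) (by simp [hgs, hhs])
      (funext fun v => (congrFun hh (g v)).trans (congrFun hg v)))
  let e : G ≃g G :=
    { toFun := g
      invFun := h
      left_inv := hhg
      right_inv := hgh
      map_rel_iff' := fun {u v} =>
        ⟨fun huv => hhg u ▸ hhg v ▸ h.map_adj huv, g.map_adj⟩ }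
  have het : e t = t := hφinj s (by rw [mem_neighborSet, ← hgs]; exact g.map_adj hst) hst
    ((congrFun hg t).trans ht)
  refine ⟨e, ⟨⟨hgs, het⟩, hg.symm⟩, fun e' ⟨⟨he's, _⟩, he'⟩ => RelIso.ext fun v => ?_⟩
  exact DFunLike.congr_fun (hG'.hom_ext_of_comp_eq (g₁ := e'.toHom) (g₂ := e.toHom) hφinj
    (he's.trans hgs.symm) (he'.symm.trans hg.symm)) v

end SimpleGraph

/-- on a tree in which every vertex has degree 3, for adjacent vertices
`s ~ t` and `α ≠ β` in `ℂ`, the graph automorphisms fixing `s` and `t` act (via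
`φ ↦ φ ∘ g`) simply transitively on the nonempty set of ℂ-valued holomorphic functions
`φ` with `φ s = α` and `φ t = β`. -/
theorem aut_fixing_edge_acts_simply_transitively_on_holomorphic
    {V : Type*} (G : SimpleGraph V) [G.LocallyFinite]
    (htree : G.IsTree) (hdeg : ∀ v : V, G.degree v = 3)
    (s t : V) (hst : G.Adj s t) (α β : ℂ) (hαβ : α ≠ β) :
    (∃ φ : V → ℂ, G.IsHolomorphic φ ∧ φ s = α ∧ φ t = β) ∧
    (∀ φ : V → ℂ, (G.IsHolomorphic φ ∧ φ s = α ∧ φ t = β) →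
      ∀ g : G ≃g G, g s = s → g t = t →
        (G.IsHolomorphic (φ ∘ g) ∧ (φ ∘ g) s = α ∧ (φ ∘ g) t = β)) ∧
    (∀ φ ψ : V → ℂ, (G.IsHolomorphic φ ∧ φ s = α ∧ φ t = β) →
      (G.IsHolomorphic ψ ∧ ψ s = α ∧ ψ t = β) →
        ∃! g : G ≃g G, (g s = s ∧ g t = t) ∧ ψ = φ ∘ g) := by
  obtain ⟨ω, hω⟩ : ∃ ω : ℂ, IsPrimitiveRoot ω 3 := ⟨_, Complex.isPrimitiveRoot_exp 3 (by norm_num)⟩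
  refine ⟨htree.exists_isHolomorphic hdeg hω hst α β, ?_, ?_⟩
  · rintro φ ⟨hφ, hφs, hφt⟩ g hgs hgt
    exact ⟨hφ.comp_iso g, by simp [hgs, hφs], by simp [hgt, hφt]⟩
  · rintro φ ψ ⟨hφ, hφs, hφt⟩ ⟨hψ, hψs, hψt⟩
    exact htree.existsUnique_iso_comp_eq hω hdeg hφ hψ hst (hψs.trans hφs.symm)
      (hψt.trans hφt.symm) (by rwa [hφs, hφt])
end
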